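/- arXiv:2109.01974 — 2 statements merged into one kernel-verified Lean document; each statement's English description precedes it below -/
import Mathlib

section
/- For every k ≥ 0, Broyden's 'bad' scheme satisfies r_{k+1} ≤ [κ τ_k + (1 + τ_k) M r_k/(2μ)] · r_k. -/
open Matrix MeasureTheory

noncomputable def specNorm {n : ℕ} (A : Matrix (Fin n) (Fin n) ℝ) : ℝ :=
  ‖Matrix.toEuclideanCLM (𝕜 := ℝ) A‖

noncomputable def frobNorm {n : ℕ} (A : Matrix (Fin n) (Fin n) ℝ) : ℝ :=
  Real.sqrt (∑ i, ∑ j, (A i j) ^ 2)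

noncomputable def vnorm {n : ℕ} (x : Fin n → ℝ) : ℝ :=
  Real.sqrt (∑ i, (x i) ^ 2)

noncomputable def intJac {n : ℕ} (J : (Fin n → ℝ) → Matrix (Fin n) (Fin n) ℝ)
    (x u : Fin n → ℝ) : Matrix (Fin n) (Fin n) ℝ :=
  Matrix.of fun i j => ∫ t in (0:ℝ)..(1:ℝ), J (x + t • u) i j

/-!
With `e = x_k - x*` and `R = F(x_k) - J* e`, one step gives `x_{k+1} - x* = (I - H_k J*) e - H_k R`.
Writing `D = J*(H_k - J*⁻¹)`, we have `H_k J* - I = J*⁻¹ D J*` and `H_k = J*⁻¹ (I + D)`, and the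
spectral norm of `D` is at most its Frobenius norm `τ_k`; so the two operators have norms at most
`κ τ_k` and `(1 + τ_k)/μ`. The Lipschitz bound on `J` gives `‖R‖ ≤ M r_k² / 2`, by comparing
`t ↦ F(x* + t e) - t J* e` on `[0, 1]` with the boundary function `t ↦ M ‖e‖² t² / 2`.
-/

theorem norm_image_add_sub_sub_fderiv_le {E F : Type*} [NormedAddCommGroup E] [NormedSpace ℝ E]
    [NormedAddCommGroup F] [NormedSpace ℝ F] {f : E → F} {f' : E → E →L[ℝ] F} {a : E} {M : ℝ}
    (hf : ∀ z, HasFDerivAt f (f' z) z) (hf' : ∀ z, ‖f' z - f' a‖ ≤ M * ‖z - a‖) (e : E) :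
    ‖f (a + e) - f a - f' a e‖ ≤ M / 2 * ‖e‖ ^ 2 := by
  set g : ℝ → F := fun t => f (a + t • e) - f a - t • f' a e
  have hg : ∀ t, HasDerivAt g ((f' (a + t • e) - f' a) e) t := by
    intro t
    have hline : HasDerivAt (fun s : ℝ => a + s • e) e t := by
      simpa using ((hasDerivAt_id t).smul_const e).const_add a
    have := (((hf _).comp_hasDerivAt t hline).sub_const (f a)).fun_sub
      ((hasDerivAt_id t).smul_const (f' a e))
    simpa [g] using this
  have hB : ∀ t, HasDerivAt (fun t : ℝ => M / 2 * ‖e‖ ^ 2 * t ^ 2) (M * ‖e‖ ^ 2 * t) t := by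
    intro t
    exact ((hasDerivAt_pow 2 t).const_mul (M / 2 * ‖e‖ ^ 2)).congr_deriv (by norm_num; ring)
  have hbound : ∀ t ∈ Set.Ico (0 : ℝ) 1, ‖(f' (a + t • e) - f' a) e‖ ≤ M * ‖e‖ ^ 2 * t := by
    intro t ht
    calc ‖(f' (a + t • e) - f' a) e‖ ≤ ‖f' (a + t • e) - f' a‖ * ‖e‖ :=
          ContinuousLinearMap.le_opNorm _ _
      _ ≤ M * ‖t • e‖ * ‖e‖ := by
          gcongr
          simpa using hf' (a + t • e)
      _ = M * ‖e‖ ^ 2 * t := by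
          rw [norm_smul, Real.norm_of_nonneg ht.1]; ring
  simpa [g] using image_norm_le_of_norm_deriv_right_le_deriv_boundary
    (fun t _ => (hg t).continuousAt.continuousWithinAt) (fun t _ => (hg t).hasDerivWithinAt)
    (by simp [g]) hB hbound (Set.right_mem_Icc.2 zero_le_one)

theorem norm_quasiNewton_step_le {𝕜 E : Type*} [NontriviallyNormedField 𝕜]
    [NormedAddCommGroup E] [NormedSpace 𝕜 E] {A A' H : E →L[𝕜] E} (hA : A' * A = 1)
    {τ ρ : ℝ} (hτ : ‖A * (H - A')‖ ≤ τ) (e : E) {R : E} (hR : ‖R‖ ≤ ρ) :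
    ‖e - H (A e + R)‖ ≤ ‖A'‖ * τ * ‖A‖ * ‖e‖ + ‖A'‖ * (1 + τ) * ρ := by
  set D := A * (H - A')
  have hτ0 : 0 ≤ τ := (norm_nonneg D).trans hτ
  have hP : A' * D * A = H * A - 1 := by simp only [D, ← mul_assoc, hA, one_mul, sub_mul]
  have hH : H = A' + A' * D := by simp only [D, ← mul_assoc, hA, one_mul, add_sub_cancel]
  have hdecomp : e - H (A e + R) = -((A' * D * A) e + H R) := by
    rw [hP]
    simp only [map_add, _root_.sub_apply, mul_apply_eq_comp, one_apply_eq_self]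
    abel
  have hHnorm : ‖H‖ ≤ ‖A'‖ * (1 + τ) := by
    calc ‖H‖ ≤ ‖A'‖ + ‖A'‖ * ‖D‖ := by
          rw [hH]; exact (norm_add_le _ _).trans (by gcongr; exact norm_mul_le _ _)
      _ ≤ ‖A'‖ * (1 + τ) := by nlinarith [norm_nonneg A']
  calc ‖e - H (A e + R)‖ ≤ ‖A' * D * A‖ * ‖e‖ + ‖H‖ * ‖R‖ := by
        rw [hdecomp, norm_neg]
        exact (norm_add_le _ _).trans (add_le_add ((A' * D * A).le_opNorm e) (H.le_opNorm R))
    _ ≤ ‖A'‖ * ‖D‖ * ‖A‖ * ‖e‖ + ‖A'‖ * (1 + τ) * ρ := by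
        gcongr
        exact norm_mul₃_le
    _ ≤ ‖A'‖ * τ * ‖A‖ * ‖e‖ + ‖A'‖ * (1 + τ) * ρ := by gcongr

theorem vnorm_eq_norm_toLp {n : ℕ} (v : Fin n → ℝ) : vnorm v = ‖WithLp.toLp 2 v‖ := by
  simp [vnorm, EuclideanSpace.norm_eq]

theorem specNorm_le_frobNorm {n : ℕ} (A : Matrix (Fin n) (Fin n) ℝ) :
    specNorm A ≤ frobNorm A := by
  refine ContinuousLinearMap.opNorm_le_bound _ (Real.sqrt_nonneg _) fun v => ?_
  simp only [EuclideanSpace.norm_eq, Real.norm_eq_abs, sq_abs, ofLp_toEuclideanCLM, frobNorm]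
  rw [← Real.sqrt_mul (by positivity)]
  refine Real.sqrt_le_sqrt ?_
  rw [Finset.sum_mul]
  exact Finset.sum_le_sum fun i _ =>
    Finset.sum_mul_sq_le_sq_mul_sq Finset.univ (fun j => A i j) v.ofLp

section Euclidean

variable {n : ℕ} {F : (Fin n → ℝ) → (Fin n → ℝ)} {J : (Fin n → ℝ) → Matrix (Fin n) (Fin n) ℝ}

theorem hasFDerivAt_toLp_comp_ofLp
    (hF : ∀ z, HasFDerivAt F (LinearMap.toContinuousLinearMap ((J z).mulVecLin)) z)
    (z : EuclideanSpace ℝ (Fin n)) :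
    HasFDerivAt (fun z : EuclideanSpace ℝ (Fin n) => WithLp.toLp 2 (F z.ofLp))
      (toEuclideanCLM (𝕜 := ℝ) (J z.ofLp)) z := by
  set P := PiLp.continuousLinearEquiv 2 ℝ (fun _ : Fin n => ℝ)
  exact P.symm.hasFDerivAt.comp z ((hF _).comp z P.hasFDerivAt)

theorem vnorm_sub_sub_mulVec_le
    (hF : ∀ z, HasFDerivAt F (LinearMap.toContinuousLinearMap ((J z).mulVecLin)) z)
    {a : Fin n → ℝ} {M : ℝ} (hLip : ∀ z, specNorm (J z - J a) ≤ M * vnorm (z - a))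
    (e : Fin n → ℝ) : vnorm (F (a + e) - F a - J a *ᵥ e) ≤ M / 2 * vnorm e ^ 2 := by
  have := norm_image_add_sub_sub_fderiv_le (hasFDerivAt_toLp_comp_ofLp hF)
    (a := WithLp.toLp 2 a) (M := M) (fun z => by
      simpa [specNorm, vnorm_eq_norm_toLp] using hLip z.ofLp) (WithLp.toLp 2 e)
  simpa [vnorm_eq_norm_toLp] using this

end Euclidean

theorem stmt12_general {n : ℕ} (F : (Fin n → ℝ) → (Fin n → ℝ))
    (J : (Fin n → ℝ) → Matrix (Fin n) (Fin n) ℝ)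
    (hF : ∀ z, HasFDerivAt F (LinearMap.toContinuousLinearMap ((J z).mulVecLin)) z)
    (xs : Fin n → ℝ) (hxs : F xs = 0) (hJs : IsUnit (J xs).det)
    (μ L κ : ℝ) (hμ : μ = 1 / specNorm ((J xs)⁻¹)) (hL : L = specNorm (J xs)) (hκ : κ = L / μ)
    (M : ℝ)
    (hLip : ∀ z, specNorm (J z - J xs) ≤ M * vnorm (z - xs))
    (x : ℕ → Fin n → ℝ) (H : ℕ → Matrix (Fin n) (Fin n) ℝ)
    (hx : ∀ k, x (k + 1) = x k - H k *ᵥ F (x k)) :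
    ∀ k : ℕ, vnorm (x (k + 1) - xs) ≤
      (κ * frobNorm (J xs * (H k - (J xs)⁻¹))
          + (1 + frobNorm (J xs * (H k - (J xs)⁻¹))) * M * vnorm (x k - xs) / (2 * μ)) *
        vnorm (x k - xs) := by
  intro k
  set T := toEuclideanCLM (n := Fin n) (𝕜 := ℝ)
  set e := x k - xs
  set R := F (x k) - J xs *ᵥ e
  have hinv : T (J xs)⁻¹ * T (J xs) = 1 := by rw [← map_mul, nonsing_inv_mul _ hJs, map_one]
  have hτ : ‖T (J xs) * (T (H k) - T (J xs)⁻¹)‖ ≤ frobNorm (J xs * (H k - (J xs)⁻¹)) := by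
    rw [← map_sub, ← map_mul]; exact specNorm_le_frobNorm _
  have hR : ‖WithLp.toLp 2 R‖ ≤ M / 2 * vnorm e ^ 2 := by
    simpa [vnorm_eq_norm_toLp, e, R, hxs] using vnorm_sub_sub_mulVec_le hF hLip e
  have hnext : x (k + 1) - xs = e - H k *ᵥ (J xs *ᵥ e + R) := by
    rw [hx k, add_sub_cancel, sub_right_comm]
  rw [vnorm_eq_norm_toLp, hnext, WithLp.toLp_sub, ← toEuclideanCLM_toLp, WithLp.toLp_add,
    ← toEuclideanCLM_toLp]
  refine (norm_quasiNewton_step_le hinv hτ _ hR).trans_eq ?_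
  rw [hκ, hμ, hL, ← vnorm_eq_norm_toLp]
  simp only [specNorm, T, div_eq_mul_inv, one_mul, mul_inv, inv_inv]
  ring

/-- For Broyden's "bad" scheme, for every `k`,
`r_{k+1} ≤ (κ τ_k + (1 + τ_k) M r_k/(2μ)) · r_k`. -/
theorem stmt12 {n : ℕ} (F : (Fin n → ℝ) → (Fin n → ℝ))
    (J : (Fin n → ℝ) → Matrix (Fin n) (Fin n) ℝ)
    (hF : ∀ z, HasFDerivAt F (LinearMap.toContinuousLinearMap ((J z).mulVecLin)) z)
    (hJc : Continuous J)
    (xs : Fin n → ℝ) (hxs : F xs = 0) (hJs : IsUnit (J xs).det)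
    (μ L κ : ℝ) (hμ : μ = 1 / specNorm ((J xs)⁻¹)) (hL : L = specNorm (J xs)) (hκ : κ = L / μ)
    (M : ℝ) (hM : 0 ≤ M)
    (hLip : ∀ z, specNorm (J z - J xs) ≤ M * vnorm (z - xs))
    (x : ℕ → Fin n → ℝ) (H : ℕ → Matrix (Fin n) (Fin n) ℝ)
    (hHk : ∀ k, IsUnit (H k).det) (hFk : ∀ k, F (x k) ≠ 0)
    (hyk : ∀ k, F (x (k + 1)) - F (x k) ≠ 0)
    (hx : ∀ k, x (k + 1) = x k - H k *ᵥ F (x k))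
    (hH : ∀ k, H (k + 1) = H k +
        ((F (x (k + 1)) - F (x k)) ⬝ᵥ (F (x (k + 1)) - F (x k)))⁻¹ •
          vecMulVec (x (k + 1) - x k - H k *ᵥ (F (x (k + 1)) - F (x k)))
            (F (x (k + 1)) - F (x k))) :
    ∀ k : ℕ, vnorm (x (k + 1) - xs) ≤
      (κ * frobNorm (J xs * (H k - (J xs)⁻¹))
          + (1 + frobNorm (J xs * (H k - (J xs)⁻¹))) * M * vnorm (x k - xs) / (2 * μ)) *
        vnorm (x k - xs) :=
  stmt12_general F J hF xs hxs hJs μ L κ hμ hL hκ M hLip x H hx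
end

section
/- Suppose 28 M r₀/μ + τ₀ ≤ 1/(2κ). Define q_m := min{ q : τ₀ ≤ q/κ and M r₀/μ ≤ (q(1−q)/7)·(q/κ − τ₀) }. Then the feasible set contains q = 1/2 (so q_m is well defined), and (1/2)·(κτ₀ + √(κ M r₀/μ)) ≤ q_m ≤ 4·(κτ₀ + √(κ M r₀/μ)). -/
/-!
With `a := κ τ₀` and `b := κ M r₀ / μ`, multiplying both conditions by `κ > 0` turns the
feasible set into `{q | a ≤ q ∧ b ≤ q (1 - q) (q - a) / 7}`. Since `q (1 - q) (q - a) / 7 ≤ q²`,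
every feasible `q` dominates both `a` and `√b`. Conversely, for `q = 4 (a + √b) < 1/2` one has
`1 - q ≥ 1/2` and `q (q - a) ≥ 16 b`, so `q` is feasible; otherwise the feasible point `1/2` is
already below `q`.
-/

open Matrix MeasureTheory

lemma specNorm_nonneg {n : ℕ} (A : Matrix (Fin n) (Fin n) ℝ) : 0 ≤ specNorm A :=
  norm_nonneg _

lemma frobNorm_nonneg {n : ℕ} (A : Matrix (Fin n) (Fin n) ℝ) : 0 ≤ frobNorm A :=
  Real.sqrt_nonneg _

lemma vnorm_nonneg {n : ℕ} (x : Fin n → ℝ) : 0 ≤ vnorm x :=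
  Real.sqrt_nonneg _

/-- The feasible set of the statement, with `c` standing for `M r₀ / μ`. -/
def admissibleRates (κ τ c : ℝ) : Set ℝ :=
  {q | τ ≤ q / κ ∧ c ≤ q * (1 - q) / 7 * (q / κ - τ)}

namespace admissibleRates

lemma zero_zero_zero : admissibleRates 0 0 0 = Set.univ := by
  ext q
  simp [admissibleRates]

lemma eq_admissibleRates_one {κ τ c : ℝ} (hκ : 0 < κ) :
    admissibleRates κ τ c = admissibleRates 1 (κ * τ) (κ * c) := by
  ext q
  have hscale : κ * (q * (1 - q) / 7 * (q / κ - τ)) = q * (1 - q) / 7 * (q - κ * τ) := by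
    field_simp
  simp only [admissibleRates, Set.mem_ofPred_eq, div_one]
  refine and_congr ?_ ?_
  · rw [le_div_iff₀ hκ, mul_comm]
  · rw [← hscale, mul_le_mul_iff_right₀ hκ]

variable {a b : ℝ}

lemma half_mem (hb : 0 ≤ b) (hab : a + 28 * b ≤ 1 / 2) : 1 / 2 ∈ admissibleRates 1 a b := by
  simp only [admissibleRates, Set.mem_ofPred_eq, div_one]
  constructor <;> linarith

lemma half_add_sqrt_le {q : ℝ} (ha : 0 ≤ a) (hq : q ∈ admissibleRates 1 a b) :
    1 / 2 * (a + √b) ≤ q := by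
  simp only [admissibleRates, Set.mem_ofPred_eq, div_one] at hq
  obtain ⟨haq, hbq⟩ := hq
  have hsqrt : √b ≤ q := by
    rw [Real.sqrt_le_left (ha.trans haq)]
    nlinarith [mul_nonneg (ha.trans haq) ha, mul_nonneg (ha.trans haq) (sub_nonneg.2 haq)]
  linarith

lemma four_mul_add_sqrt_mem (ha : 0 ≤ a) (hb : 0 ≤ b) (hlt : 4 * (a + √b) < 1 / 2) :
    4 * (a + √b) ∈ admissibleRates 1 a b := by
  simp only [admissibleRates, Set.mem_ofPred_eq, div_one]
  set s := √b
  have hs : 0 ≤ s := Real.sqrt_nonneg b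
  have hsq : s ^ 2 = b := Real.sq_sqrt hb
  have hprod : 16 * s ^ 2 ≤ (4 * a + 4 * s) * (3 * a + 4 * s) := by
    nlinarith [mul_nonneg ha hs, sq_nonneg a]
  have hhalf : 1 / 2 * ((4 * a + 4 * s) * (3 * a + 4 * s)) ≤
      (1 - 4 * (a + s)) * ((4 * a + 4 * s) * (3 * a + 4 * s)) :=
    mul_le_mul_of_nonneg_right (by linarith) (by positivity)
  refine ⟨by linarith, ?_⟩
  nlinarith

lemma csInf_bounds_one (ha : 0 ≤ a) (hb : 0 ≤ b) (hab : a + 28 * b ≤ 1 / 2) :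
    1 / 2 * (a + √b) ≤ sInf (admissibleRates 1 a b) ∧
      sInf (admissibleRates 1 a b) ≤ 4 * (a + √b) := by
  have hhalf := half_mem hb hab
  have hbdd : BddBelow (admissibleRates 1 a b) := ⟨_, fun q hq => half_add_sqrt_le ha hq⟩
  refine ⟨le_csInf ⟨_, hhalf⟩ fun q hq => half_add_sqrt_le ha hq, ?_⟩
  rcases lt_or_ge (4 * (a + √b)) (1 / 2) with hlt | hge
  · exact csInf_le hbdd (four_mul_add_sqrt_mem ha hb hlt)
  · exact (csInf_le hbdd hhalf).trans hge

/-- For `κ = 0` the hypothesis reads `28 c + τ ≤ 1 / 0 = 0`, forcing `τ = c = 0`; the set is then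
`Set.univ`, whose real infimum is the junk value `0`. -/
theorem csInf_bounds {κ τ c : ℝ} (hκ : 0 ≤ κ) (hτ : 0 ≤ τ) (hc : 0 ≤ c)
    (hinit : 28 * c + τ ≤ 1 / (2 * κ)) :
    1 / 2 ∈ admissibleRates κ τ c ∧
      1 / 2 * (κ * τ + √(κ * c)) ≤ sInf (admissibleRates κ τ c) ∧
      sInf (admissibleRates κ τ c) ≤ 4 * (κ * τ + √(κ * c)) := by
  rcases hκ.eq_or_lt with rfl | hκ
  · obtain ⟨rfl, rfl⟩ : τ = 0 ∧ c = 0 := by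
      simp only [mul_zero, div_zero] at hinit
      constructor <;> linarith
    simp [zero_zero_zero]
  · have hab : κ * τ + 28 * (κ * c) ≤ 1 / 2 := by
      have := mul_le_mul_of_nonneg_left hinit hκ.le
      rw [mul_one_div, div_mul_cancel_right₀ hκ.ne'] at this
      linarith
    rw [eq_admissibleRates_one hκ]
    exact ⟨half_mem (by positivity) hab, csInf_bounds_one (by positivity) (by positivity) hab⟩

end admissibleRates

theorem stmt16_general {n : ℕ}
    (J : (Fin n → ℝ) → Matrix (Fin n) (Fin n) ℝ)
    (xs : Fin n → ℝ)
    (μ L κ : ℝ) (hμ : μ = 1 / specNorm ((J xs)⁻¹)) (hL : L = specNorm (J xs)) (hκ : κ = L / μ)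
    (M : ℝ) (hM : 0 ≤ M)
    (x0 : Fin n → ℝ) (H0 : Matrix (Fin n) (Fin n) ℝ)
    (r0 τ0 : ℝ) (hr0 : r0 = vnorm (x0 - xs)) (hτ0 : τ0 = frobNorm (J xs * (H0 - (J xs)⁻¹)))
    (hinit : 28 * M * r0 / μ + τ0 ≤ 1 / (2 * κ)) :
    (1 / 2 : ℝ) ∈ {q : ℝ | τ0 ≤ q / κ ∧
        M * r0 / μ ≤ q * (1 - q) / 7 * (q / κ - τ0)} ∧
      1 / 2 * (κ * τ0 + Real.sqrt (κ * M * r0 / μ)) ≤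
        sInf {q : ℝ | τ0 ≤ q / κ ∧
          M * r0 / μ ≤ q * (1 - q) / 7 * (q / κ - τ0)} ∧
      sInf {q : ℝ | τ0 ≤ q / κ ∧
          M * r0 / μ ≤ q * (1 - q) / 7 * (q / κ - τ0)} ≤
        4 * (κ * τ0 + Real.sqrt (κ * M * r0 / μ)) := by
  have hμ0 : 0 ≤ μ := hμ ▸ one_div_nonneg.2 (specNorm_nonneg _)
  have hκ0 : 0 ≤ κ := hκ ▸ div_nonneg (hL ▸ specNorm_nonneg _) hμ0
  have hc : 0 ≤ M * r0 / μ := div_nonneg (mul_nonneg hM (hr0 ▸ vnorm_nonneg _)) hμ0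
  have hinit' : 28 * (M * r0 / μ) + τ0 ≤ 1 / (2 * κ) := by
    rwa [← mul_div_assoc, ← mul_assoc]
  rw [show κ * M * r0 / μ = κ * (M * r0 / μ) by ring]
  exact admissibleRates.csInf_bounds hκ0 (hτ0 ▸ frobNorm_nonneg _) hc hinit'

/-- If `28 M r₀/μ + τ₀ ≤ 1/(2κ)`, the feasible set
`{q : τ₀ ≤ q/κ ∧ M r₀/μ ≤ (q(1−q)/7)(q/κ − τ₀)}` contains `q = 1/2`
(so `q_m := inf` of this set is well defined), and
`(1/2)(κτ₀ + √(κ M r₀/μ)) ≤ q_m ≤ 4(κτ₀ + √(κ M r₀/μ))`. -/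
theorem stmt16 {n : ℕ} (F : (Fin n → ℝ) → (Fin n → ℝ))
    (J : (Fin n → ℝ) → Matrix (Fin n) (Fin n) ℝ)
    (hF : ∀ z, HasFDerivAt F (LinearMap.toContinuousLinearMap ((J z).mulVecLin)) z)
    (hJc : Continuous J)
    (xs : Fin n → ℝ) (hxs : F xs = 0) (hJs : IsUnit (J xs).det)
    (μ L κ : ℝ) (hμ : μ = 1 / specNorm ((J xs)⁻¹)) (hL : L = specNorm (J xs)) (hκ : κ = L / μ)
    (M : ℝ) (hM : 0 ≤ M)
    (hLip : ∀ z, specNorm (J z - J xs) ≤ M * vnorm (z - xs))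
    (x0 : Fin n → ℝ) (H0 : Matrix (Fin n) (Fin n) ℝ)
    (r0 τ0 : ℝ) (hr0 : r0 = vnorm (x0 - xs)) (hτ0 : τ0 = frobNorm (J xs * (H0 - (J xs)⁻¹)))
    (hinit : 28 * M * r0 / μ + τ0 ≤ 1 / (2 * κ)) :
    (1 / 2 : ℝ) ∈ {q : ℝ | τ0 ≤ q / κ ∧
        M * r0 / μ ≤ q * (1 - q) / 7 * (q / κ - τ0)} ∧
      1 / 2 * (κ * τ0 + Real.sqrt (κ * M * r0 / μ)) ≤
        sInf {q : ℝ | τ0 ≤ q / κ ∧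
          M * r0 / μ ≤ q * (1 - q) / 7 * (q / κ - τ0)} ∧
      sInf {q : ℝ | τ0 ≤ q / κ ∧
          M * r0 / μ ≤ q * (1 - q) / 7 * (q / κ - τ0)} ≤
        4 * (κ * τ0 + Real.sqrt (κ * M * r0 / μ)) :=
  stmt16_general J xs μ L κ hμ hL hκ M hM x0 H0 r0 τ0 hr0 hτ0 hinit
end
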